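/- arXiv:1004.1483 — 7 statements merged into one kernel-verified Lean document; each statement's English description precedes it below -/
import Mathlib

section
/- For every compact subgroup 𝒢 of GL(n,ℝ) (the group of invertible n×n real matrices with its standard topology), there exists a symmetric positive-definite real n×n matrix S such that for every G ∈ 𝒢 the matrix S G S⁻¹ is orthogonal, i.e. (S G S⁻¹)ᵀ (S G S⁻¹) = 1. -/
/-!
Weyl's averaging trick. Integrating the Gram matrices `Gᵀ G` over the Haar measure of the compact
group gives a positive definite `P` with `Gᵀ P G = P` for all `G` in the group. With `S = √P`
symmetric, `(S G S⁻¹)ᵀ (S G S⁻¹) = S⁻¹ (Gᵀ P G) S⁻¹ = S⁻¹ P S⁻¹ = 1`.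
-/

open Matrix MeasureTheory

open scoped MatrixOrder Matrix.Norms.L2Operator

namespace Matrix

section Conjugation

variable {ι R : Type*} [Fintype ι] [DecidableEq ι] [CommRing R]

theorem transpose_conj_mul_conj_eq_one {S M : Matrix ι ι R} (hS : IsUnit S.det) (hSt : Sᵀ = S)
    (hM : Mᵀ * (S * S) * M = S * S) : (S * M * S⁻¹)ᵀ * (S * M * S⁻¹) = 1 := by
  have hSt' : (S * M * S⁻¹)ᵀ = S⁻¹ * Mᵀ * S := by
    rw [transpose_mul, transpose_mul, transpose_nonsing_inv, hSt, Matrix.mul_assoc]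
  calc (S * M * S⁻¹)ᵀ * (S * M * S⁻¹)
      = S⁻¹ * (Mᵀ * (S * S) * M) * S⁻¹ := by rw [hSt']; noncomm_ring
    _ = S⁻¹ * S * (S * S⁻¹) := by rw [hM]; noncomm_ring
    _ = 1 := by rw [nonsing_inv_mul S hS, mul_nonsing_inv S hS, Matrix.one_mul]

end Conjugation

theorem PosDef.transpose_eq {ι : Type*} {A : Matrix ι ι ℝ} (hA : A.PosDef) : Aᵀ = A := by
  simpa using hA.isHermitian.eq

variable {ι : Type*} [Fintype ι] [DecidableEq ι]

theorem posDef_transpose_mul_self_of_isUnit {A : Matrix ι ι ℝ} (hA : IsUnit A) :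
    (Aᵀ * A).PosDef := by
  simpa using PosDef.conjTranspose_mul_self A (mulVec_injective_iff_isUnit.mpr hA)

theorem PosDef.exists_posDef_conj_orthogonal {P : Matrix ι ι ℝ} (hP : P.PosDef) :
    ∃ S : Matrix ι ι ℝ, S.PosDef ∧ Sᵀ = S ∧
      ∀ M : Matrix ι ι ℝ, Mᵀ * P * M = P → (S * M * S⁻¹)ᵀ * (S * M * S⁻¹) = 1 := by
  have hS : (CFC.sqrt P).PosDef := hP.isStrictlyPositive.sqrt.posDef
  have hSS : CFC.sqrt P * CFC.sqrt P = P := CFC.sqrt_mul_sqrt_self P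
  refine ⟨CFC.sqrt P, hS, hS.transpose_eq, fun M hM => ?_⟩
  refine transpose_conj_mul_conj_eq_one hS.det_pos.ne'.isUnit hS.transpose_eq ?_
  rwa [hSS]

variable {X : Type*} [MeasurableSpace X] {μ : Measure X}

theorem transpose_integral (F : X → Matrix ι ι ℝ) : (∫ x, F x ∂μ)ᵀ = ∫ x, (F x)ᵀ ∂μ :=
  ((transposeLinearEquiv ι ι ℝ ℝ).toContinuousLinearEquiv.integral_comp_comm F).symm

theorem _root_.MeasureTheory.Integrable.dotProduct_mulVec {F : X → Matrix ι ι ℝ}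
    (hF : Integrable F μ) (v w : ι → ℝ) :
    Integrable (fun x => v ⬝ᵥ F x *ᵥ w) μ := by
  let L : Matrix ι ι ℝ →ₗ[ℝ] ℝ :=
    LinearMap.applyₗ w ∘ₗ LinearMap.applyₗ v ∘ₗ (toLinearMap₂' ℝ).toLinearMap
  simpa [L, toLinearMap₂'_apply'] using L.toContinuousLinearMap.integrable_comp hF

theorem dotProduct_integral_mulVec {F : X → Matrix ι ι ℝ} (hF : Integrable F μ) (v w : ι → ℝ) :
    v ⬝ᵥ (∫ x, F x ∂μ) *ᵥ w = ∫ x, v ⬝ᵥ F x *ᵥ w ∂μ := by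
  let L : Matrix ι ι ℝ →ₗ[ℝ] ℝ :=
    LinearMap.applyₗ w ∘ₗ LinearMap.applyₗ v ∘ₗ (toLinearMap₂' ℝ).toLinearMap
  simpa [L, toLinearMap₂'_apply'] using (L.toContinuousLinearMap.integral_comp_comm hF).symm

theorem posDef_integral [NeZero μ] {F : X → Matrix ι ι ℝ} (hF : Integrable F μ)
    (hpos : ∀ x, (F x).PosDef) : (∫ x, F x ∂μ).PosDef := by
  refine .of_dotProduct_mulVec_pos ?_ fun v hv => ?_
  · rw [IsHermitian, conjTranspose_eq_transpose_of_trivial, transpose_integral]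
    simp_rw [fun x => (hpos x).transpose_eq]
  · have hq (x : X) : 0 < v ⬝ᵥ F x *ᵥ v := by simpa using (hpos x).dotProduct_mulVec_pos hv
    rw [star_trivial, dotProduct_integral_mulVec hF,
      integral_pos_iff_support_of_nonneg (fun x => (hq x).le) (hF.dotProduct_mulVec v v),
      Function.support_eq_univ fun x => (hq x).ne']
    simp [NeZero.ne]

theorem transpose_mul_integral_gram_mul {G : Type*} [Group G] [MeasurableSpace G]
    [MeasurableMul G] {μ : Measure G} [μ.IsMulRightInvariant] (ρ : G →* Matrix ι ι ℝ)
    (hρ : Integrable (fun g => (ρ g)ᵀ * ρ g) μ) (h : G) :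
    (ρ h)ᵀ * (∫ g, (ρ g)ᵀ * ρ g ∂μ) * ρ h = ∫ g, (ρ g)ᵀ * ρ g ∂μ := by
  rw [← integral_const_mul_of_integrable hρ,
    ← integral_mul_const_of_integrable (hρ.const_mul _)]
  simp_rw [← Matrix.mul_assoc, ← transpose_mul, Matrix.mul_assoc, ← map_mul]
  exact integral_mul_right_eq_self (fun g => (ρ g)ᵀ * ρ g) h

end Matrix

/-- For every compact subgroup `H` of `GL(n, ℝ)`, there exists a symmetric positive-definite
real `n × n` matrix `S` such that `S G S⁻¹` is orthogonal for every `G ∈ H`. -/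
theorem stmt_0 (n : ℕ) (H : Subgroup (GL (Fin n) ℝ))
    (hH : IsCompact (H : Set (GL (Fin n) ℝ))) :
    ∃ S : Matrix (Fin n) (Fin n) ℝ, S.PosDef ∧ Sᵀ = S ∧
      ∀ G ∈ H, (S * (G : Matrix (Fin n) (Fin n) ℝ) * S⁻¹)ᵀ *
        (S * (G : Matrix (Fin n) (Fin n) ℝ) * S⁻¹) = 1 := by
  have : CompactSpace H := isCompact_iff_compactSpace.mp hH
  borelize (↥H)
  -- `haar` is left-invariant; the averaging argument needs right invariance.
  let μ : Measure H := Measure.haar.inv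
  let ρ : H →* Matrix (Fin n) (Fin n) ℝ := (Units.coeHom _).comp H.subtype
  have hρ : Continuous ρ := Units.continuous_val.comp continuous_subtype_val
  have hgram : Integrable (fun g => (ρ g)ᵀ * ρ g) μ :=
    (hρ.matrix_transpose.mul hρ).integrable_of_hasCompactSupport (.of_compactSpace _)
  obtain ⟨S, hS, hSt, horth⟩ := PosDef.exists_posDef_conj_orthogonal <|
    posDef_integral hgram fun g => posDef_transpose_mul_self_of_isUnit (g : GL (Fin n) ℝ).isUnit
  exact ⟨S, hS, hSt, fun G hG => horth _ (transpose_mul_integral_gram_mul ρ hgram ⟨G, hG⟩)⟩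
end

section
/- Let 𝒢 be a compact subgroup of GL(n,ℝ) and let P ⊆ ℝⁿ be a nonempty connected set such that G·x ∈ P for every G ∈ 𝒢 and x ∈ P, and such that the action is transitive on P: for all x, y ∈ P there exists G ∈ 𝒢 with G·x = y. Then the identity component 𝒞 of 𝒢 (the connected component of the identity matrix, which is a subgroup) is also transitive on P: for all x, y ∈ P there exists G ∈ 𝒞 with G·x = y. -/
/-!
The elements of `H` sending `x` to `y` form a closed set; if it missed the identity component of
the compact group `H`, it would miss a whole open subgroup `V`. But `V` is closed, so its orbit
`V • x` is closed in `P`; so is its complement, the image of the closed set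
`{g | g • x ∉ V • x}`, whose complement is `V`-invariant and hence open. As `P` is connected,
`V • x = P ∋ y`, a contradiction.
-/

open MulAction Set Pointwise

instance Matrix.continuousSMul_mulVec {ι R : Type*} [Fintype ι] [DecidableEq ι] [Semiring R]
    [TopologicalSpace R] [IsTopologicalSemiring R] : ContinuousSMul (Matrix ι ι R) (ι → R) :=
  ⟨continuous_fst.matrix_mulVec continuous_snd⟩

theorem exists_isClopen_disjoint_of_disjoint_connectedComponent {X : Type*} [TopologicalSpace X]
    [T2Space X] [CompactSpace X] {x : X} {T : Set X} (hT : IsClosed T)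
    (hxT : Disjoint T (connectedComponent x)) : ∃ W, IsClopen W ∧ x ∈ W ∧ Disjoint W T := by
  rw [connectedComponent_eq_iInter_isClopen, disjoint_iff_inter_eq_empty] at hxT
  obtain ⟨s, hs⟩ := hT.isCompact.elim_finite_subfamily_closed _ (fun W => W.2.1.1) hxT
  refine ⟨⋂ W ∈ s, W.1, isClopen_biInter_finset fun W _ => W.2.1,
    mem_iInter₂.2 fun W _ => W.2.2, ?_⟩
  rwa [disjoint_iff_inter_eq_empty, inter_comm]

theorem exists_openSubgroup_disjoint_of_disjoint_connectedComponent_one {G : Type*} [Group G]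
    [TopologicalSpace G] [IsTopologicalGroup G] [CompactSpace G] [T2Space G] {T : Set G}
    (hT : IsClosed T) (hT1 : Disjoint T (connectedComponent 1)) :
    ∃ V : OpenSubgroup G, Disjoint (V : Set G) T := by
  obtain ⟨W, hW, h1W, hWT⟩ := exists_isClopen_disjoint_of_disjoint_connectedComponent hT hT1
  obtain ⟨V, hVW⟩ := IsTopologicalGroup.exist_openSubgroup_sub_clopen_nhds_of_one hW h1W
  exact ⟨V, hWT.mono_left hVW⟩

section CompactAction

variable {G X : Type*} [Group G] [TopologicalSpace G] [IsTopologicalGroup G] [CompactSpace G]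
  [TopologicalSpace X] [T2Space X] [MulAction G X] [ContinuousSMul G X]

theorem image_smul_openSubgroup_eq_orbit {x : X} (hx : IsPreconnected (orbit G x))
    (V : OpenSubgroup G) : (· • x) '' (V : Set G) = orbit G x := by
  set f : G → X := (· • x)
  have hf : Continuous f := continuous_id.smul continuous_const
  set A := f '' (V : Set G)
  have hA : IsClosed A := (V.isClosed.isCompact.image hf).isClosed
  have hpre : f ⁻¹' A = (V : Set G) * f ⁻¹' A := by
    refine Subset.antisymm (fun g hg => ⟨1, V.one_mem, g, hg, one_mul g⟩) ?_
    rintro _ ⟨w, hw, g, ⟨v, hv, hvg⟩, rfl⟩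
    exact ⟨w * v, V.mul_mem hw hv, by simp only [f, mul_smul] at hvg ⊢; rw [hvg]⟩
  have hB : IsClosed (f '' (f ⁻¹' A)ᶜ) :=
    ((hpre ▸ V.isOpen.mul_right).isClosed_compl.isCompact.image hf).isClosed
  have hxA : x ∈ A := ⟨1, V.one_mem, one_smul G x⟩
  have hcover : orbit G x ⊆ A ∪ f '' (f ⁻¹' A)ᶜ := by
    rintro _ ⟨g, rfl⟩
    by_cases hg : f g ∈ A
    exacts [Or.inl hg, Or.inr ⟨g, hg, rfl⟩]
  have hdisj : orbit G x ∩ (A ∩ f '' (f ⁻¹' A)ᶜ) = ∅ :=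
    eq_empty_iff_forall_notMem.2 fun _ ⟨_, hzA, g, hg, hgz⟩ => hg (hgz.symm ▸ hzA : f g ∈ A)
  refine Subset.antisymm (image_subset_range f _) ?_
  refine ((isPreconnected_iff_subset_of_disjoint_closed.1 hx) _ _ hA hB hcover hdisj).resolve_right
    fun h => ?_
  obtain ⟨g, hg, hgx⟩ := h (mem_orbit_self x)
  exact hg (hgx.symm ▸ hxA : f g ∈ A)

variable [T2Space G]

theorem exists_mem_connectedComponent_one_smul_eq {x y : X} (hx : IsPreconnected (orbit G x))
    (hy : y ∈ orbit G x) : ∃ g ∈ connectedComponent (1 : G), g • x = y := by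
  by_contra! hcon
  have hT : IsClosed ((· • x) ⁻¹' {y} : Set G) :=
    isClosed_singleton.preimage (continuous_id.smul continuous_const)
  obtain ⟨V, hV⟩ := exists_openSubgroup_disjoint_of_disjoint_connectedComponent_one hT
    (disjoint_left.2 fun g hgy hg => hcon g hg hgy)
  obtain ⟨v, hv, hvy⟩ := (image_smul_openSubgroup_eq_orbit hx V).symm ▸ hy
  exact disjoint_left.1 hV hv hvy

end CompactAction

theorem stmt_1_general (n : ℕ) (H : Subgroup (GL (Fin n) ℝ))
    (hH : IsCompact (H : Set (GL (Fin n) ℝ)))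
    (P : Set (Fin n → ℝ)) (hPconn : IsConnected P)
    (hinv : ∀ g ∈ H, ∀ x ∈ P, (g : Matrix (Fin n) (Fin n) ℝ).mulVec x ∈ P)
    (htrans : ∀ x ∈ P, ∀ y ∈ P, ∃ g ∈ H, (g : Matrix (Fin n) (Fin n) ℝ).mulVec x = y) :
    ∀ x ∈ P, ∀ y ∈ P, ∃ g : H, g ∈ connectedComponent (1 : H) ∧
      ((g : GL (Fin n) ℝ) : Matrix (Fin n) (Fin n) ℝ).mulVec x = y := by
  intro x hx y hy
  have : CompactSpace H := isCompact_iff_compactSpace.mp hH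
  -- `g • v` is `(g : Matrix _ _ ℝ) *ᵥ v` by definition (`Matrix.smul_eq_mulVec`)
  have horbit : orbit H x = P := by
    refine Subset.antisymm (fun _ ⟨g, hg⟩ => hg ▸ hinv g g.2 x hx) fun z hz => ?_
    obtain ⟨g, hg, hgz⟩ := htrans x hx z hz
    exact ⟨⟨g, hg⟩, hgz⟩
  exact exists_mem_connectedComponent_one_smul_eq (horbit ▸ hPconn.isPreconnected)
    (horbit ▸ hy)

/-- If a compact subgroup `H ≤ GL(n, ℝ)` leaves a nonempty connected set `P ⊆ ℝⁿ` invariant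
and acts transitively on it, then the identity component of `H` also acts transitively on `P`. -/
theorem stmt_1 (n : ℕ) (H : Subgroup (GL (Fin n) ℝ))
    (hH : IsCompact (H : Set (GL (Fin n) ℝ)))
    (P : Set (Fin n → ℝ)) (hPne : P.Nonempty) (hPconn : IsConnected P)
    (hinv : ∀ g ∈ H, ∀ x ∈ P, (g : Matrix (Fin n) (Fin n) ℝ).mulVec x ∈ P)
    (htrans : ∀ x ∈ P, ∀ y ∈ P, ∃ g ∈ H, (g : Matrix (Fin n) (Fin n) ℝ).mulVec x = y) :
    ∀ x ∈ P, ∀ y ∈ P, ∃ g : H, g ∈ connectedComponent (1 : H) ∧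
      ((g : GL (Fin n) ℝ) : Matrix (Fin n) (Fin n) ℝ).mulVec x = y :=
  stmt_1_general n H hH P hPconn hinv htrans
end

section
/- Let 𝒢 be a compact subgroup of GL(n,ℝ) and S ⊆ ℝⁿ a nonempty compact convex set with G·S = S for every G ∈ 𝒢, such that 𝒢 acts transitively on the set of extreme points of S. Fix an extreme point ψ of S and define μ = ∫_𝒢 (G·ψ) dG, the barycenter with respect to the normalized Haar probability measure of 𝒢. Then: (a) μ ∈ S; (b) μ does not depend on the choice of the extreme point ψ; (c) G·μ = μ for all G ∈ 𝒢; and (d) μ is the unique such invariant point: any x ∈ S with G·x = x for all G ∈ 𝒢 equals μ. -/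
open Matrix MeasureTheory Measure

/-!
Let `P = ∫ ρ g dν` be the average of the representation over the Haar probability measure. Left
invariance of `ν` gives `ρ g ∘ P = P`, and since a left-invariant probability measure on a compact
group is also right invariant, `P ∘ ρ g = P`. Thus `P` is constant on orbits, hence, by
transitivity, on the extreme points of `S`, and then by Krein–Milman (`P` is continuous and linear)
on all of `S`; its value there is `μ`. An invariant point `x` satisfies `P x = x`, so `x = μ`.
-/

theorem MeasureTheory.Measure.isMulRightInvariant_of_isProbabilityMeasure {G : Type*} [Group G]
    [TopologicalSpace G] [IsTopologicalGroup G] [CompactSpace G] [MeasurableSpace G]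
    [BorelSpace G] (ν : Measure G) [IsProbabilityMeasure ν] [ν.IsMulLeftInvariant] :
    ν.IsMulRightInvariant := by
  have : ν.IsHaarMeasure := {}
  refine ⟨fun g => ?_⟩
  have : IsProbabilityMeasure (ν.map (· * g)) :=
    isProbabilityMeasure_map (measurable_mul_const g).aemeasurable
  exact isHaarMeasure_eq_of_isProbabilityMeasure _ ν

theorem ContinuousLinearMap.apply_eq_of_forall_extremePoints {E F : Type*}
    [NormedAddCommGroup E] [NormedSpace ℝ E] [NormedAddCommGroup F] [NormedSpace ℝ F]
    (f : E →L[ℝ] F) {S : Set E} (hScomp : IsCompact S) (hSconv : Convex ℝ S) {c : F}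
    (hc : ∀ x ∈ S.extremePoints ℝ, f x = c) {x : E} (hx : x ∈ S) : f x = c := by
  have hS : S ⊆ f ⁻¹' {c} := by
    rw [← closure_convexHull_extremePoints hScomp hSconv]
    exact closure_minimal (convexHull_min hc ((convex_singleton c).linear_preimage f.toLinearMap))
      (isClosed_singleton.preimage f.continuous)
  exact hS hx

section AverageOperator

variable {G E : Type*} [Group G] [TopologicalSpace G] [CompactSpace G] [MeasurableSpace G]
  [BorelSpace G] [NormedAddCommGroup E] [NormedSpace ℝ E]

noncomputable def averageOperator (ν : Measure G) (ρ : G →* E →L[ℝ] E) : E →L[ℝ] E :=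
  ∫ g, ρ g ∂ν

variable {ν : Measure G} [IsProbabilityMeasure ν] {ρ : G →* E →L[ℝ] E}

theorem integrable_apply_of_continuous (hρ : Continuous ρ) (y : E) :
    Integrable (fun g => ρ g y) ν :=
  (hρ.clm_apply continuous_const).integrable_of_hasCompactSupport
    (HasCompactSupport.of_compactSpace _)

theorem averageOperator_apply (hρ : Continuous ρ) (y : E) :
    averageOperator ν ρ y = ∫ g, ρ g y ∂ν :=
  ContinuousLinearMap.integral_apply
    (hρ.integrable_of_hasCompactSupport (HasCompactSupport.of_compactSpace _)) y

theorem apply_averageOperator [MeasurableMul G] [CompleteSpace E] [ν.IsMulLeftInvariant]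
    (hρ : Continuous ρ) (g : G) (y : E) : ρ g (averageOperator ν ρ y) = averageOperator ν ρ y := by
  simp only [averageOperator_apply hρ]
  rw [← (ρ g).integral_comp_comm (integrable_apply_of_continuous hρ y)]
  simp only [← mul_apply_eq_comp, ← map_mul]
  exact integral_mul_left_eq_self (fun h => ρ h y) g

theorem averageOperator_map [IsTopologicalGroup G] [ν.IsMulLeftInvariant] (hρ : Continuous ρ)
    (g : G) (y : E) : averageOperator ν ρ (ρ g y) = averageOperator ν ρ y := by
  have := ν.isMulRightInvariant_of_isProbabilityMeasure
  simp only [averageOperator_apply hρ, ← mul_apply_eq_comp, ← map_mul]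
  exact integral_mul_right_eq_self (fun h => ρ h y) g

theorem averageOperator_apply_of_forall_apply_eq [CompleteSpace E] (hρ : Continuous ρ) {x : E}
    (hx : ∀ g, ρ g x = x) : averageOperator ν ρ x = x := by
  simp [averageOperator_apply hρ, hx]

theorem averageOperator_apply_mem [CompleteSpace E] {S : Set E} (hρ : Continuous ρ)
    (hSclosed : IsClosed S) (hSconv : Convex ℝ S) (hS : ∀ g, ∀ y ∈ S, ρ g y ∈ S) {y : E}
    (hy : y ∈ S) :
    averageOperator ν ρ y ∈ S := by
  rw [averageOperator_apply hρ]
  exact hSconv.integral_mem hSclosed (.of_forall fun g => hS g y hy)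
    (integrable_apply_of_continuous hρ y)

end AverageOperator

namespace Matrix.GeneralLinearGroup

variable {m 𝕜 : Type*} [Fintype m] [DecidableEq m] [NontriviallyNormedField 𝕜] [CompleteSpace 𝕜]

noncomputable def toContinuousLinearMap : GL m 𝕜 →* (m → 𝕜) →L[𝕜] (m → 𝕜) :=
  (Module.End.toContinuousLinearMap (m → 𝕜)).toMonoidHom.comp <|
    Matrix.toLinAlgEquiv'.toMonoidHom.comp (Units.coeHom _)

theorem continuous_toContinuousLinearMap : Continuous (toContinuousLinearMap : GL m 𝕜 → _) :=
  continuous_clm_apply.2 fun y => Units.continuous_val.matrix_mulVec (continuous_const (y := y))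

end Matrix.GeneralLinearGroup

theorem stmt_2_general (n : ℕ) (H : Subgroup (GL (Fin n) ℝ))
    (hH : IsCompact (H : Set (GL (Fin n) ℝ)))
    [MeasurableSpace ↥H] [BorelSpace ↥H]
    (ν : Measure ↥H) [IsProbabilityMeasure ν] [ν.IsMulLeftInvariant]
    (S : Set (Fin n → ℝ)) (hScomp : IsCompact S) (hSconv : Convex ℝ S)
    (hinv : ∀ g ∈ H, (fun x => (g : Matrix (Fin n) (Fin n) ℝ).mulVec x) '' S = S)
    (htrans : ∀ x ∈ S.extremePoints ℝ, ∀ y ∈ S.extremePoints ℝ,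
      ∃ g ∈ H, (g : Matrix (Fin n) (Fin n) ℝ).mulVec x = y)
    (ψ : Fin n → ℝ) (hψ : ψ ∈ S.extremePoints ℝ)
    (μ : Fin n → ℝ)
    (hμ : μ = ∫ g : ↥H, ((g : GL (Fin n) ℝ) : Matrix (Fin n) (Fin n) ℝ).mulVec ψ ∂ν) :
    μ ∈ S ∧
    (∀ ψ' ∈ S.extremePoints ℝ,
      (∫ g : ↥H, ((g : GL (Fin n) ℝ) : Matrix (Fin n) (Fin n) ℝ).mulVec ψ' ∂ν) = μ) ∧
    (∀ g ∈ H, (g : Matrix (Fin n) (Fin n) ℝ).mulVec μ = μ) ∧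
    (∀ x ∈ S, (∀ g ∈ H, (g : Matrix (Fin n) (Fin n) ℝ).mulVec x = x) → x = μ) := by
  have : CompactSpace H := isCompact_iff_compactSpace.mp hH
  set ρ := GeneralLinearGroup.toContinuousLinearMap.comp H.subtype
  have hρ : Continuous ρ :=
    GeneralLinearGroup.continuous_toContinuousLinearMap.comp continuous_subtype_val
  set P := averageOperator ν ρ
  have hP (y : Fin n → ℝ) :
      P y = ∫ g : H, ((g : GL (Fin n) ℝ) : Matrix (Fin n) (Fin n) ℝ) *ᵥ y ∂ν :=
    averageOperator_apply (ν := ν) hρ y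
  have hS (g : H) : ∀ y ∈ S, ρ g y ∈ S := fun y hy => by
    rw [← hinv g g.2]
    exact ⟨y, hy, rfl⟩
  have hPext : ∀ ψ' ∈ S.extremePoints ℝ, P ψ' = P ψ := fun ψ' hψ' => by
    obtain ⟨g, hg, rfl⟩ := htrans ψ hψ ψ' hψ'
    exact averageOperator_map hρ ⟨g, hg⟩ ψ
  rw [← hP] at hμ
  subst hμ
  refine ⟨averageOperator_apply_mem hρ hScomp.isClosed hSconv hS hψ.1,
    fun ψ' hψ' => (hP ψ').symm.trans (hPext ψ' hψ'),
    fun g hg => apply_averageOperator hρ ⟨g, hg⟩ ψ, fun x hx hxfix => ?_⟩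
  rw [← averageOperator_apply_of_forall_apply_eq (ν := ν) hρ fun g => hxfix g g.2]
  exact P.apply_eq_of_forall_extremePoints hScomp hSconv hPext hx

/-- Invariance and uniqueness of the maximally mixed state: the barycenter
`μ = ∫ G·ψ dG` (over the normalized Haar probability measure of a compact subgroup
`H ≤ GL(n,ℝ)` acting transitively on the extreme points of an invariant nonempty compact
convex set `S`) lies in `S`, is independent of the chosen extreme point `ψ`, is invariant
under `H`, and is the unique `H`-invariant point of `S`. -/
theorem stmt_2 (n : ℕ) (H : Subgroup (GL (Fin n) ℝ))
    (hH : IsCompact (H : Set (GL (Fin n) ℝ)))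
    [MeasurableSpace ↥H] [BorelSpace ↥H]
    (ν : Measure ↥H) [IsProbabilityMeasure ν] [ν.IsMulLeftInvariant]
    (S : Set (Fin n → ℝ)) (hSne : S.Nonempty) (hScomp : IsCompact S) (hSconv : Convex ℝ S)
    (hinv : ∀ g ∈ H, (fun x => (g : Matrix (Fin n) (Fin n) ℝ).mulVec x) '' S = S)
    (htrans : ∀ x ∈ S.extremePoints ℝ, ∀ y ∈ S.extremePoints ℝ,
      ∃ g ∈ H, (g : Matrix (Fin n) (Fin n) ℝ).mulVec x = y)
    (ψ : Fin n → ℝ) (hψ : ψ ∈ S.extremePoints ℝ)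
    (μ : Fin n → ℝ)
    (hμ : μ = ∫ g : ↥H, ((g : GL (Fin n) ℝ) : Matrix (Fin n) (Fin n) ℝ).mulVec ψ ∂ν) :
    μ ∈ S ∧
    (∀ ψ' ∈ S.extremePoints ℝ,
      (∫ g : ↥H, ((g : GL (Fin n) ℝ) : Matrix (Fin n) (Fin n) ℝ).mulVec ψ' ∂ν) = μ) ∧
    (∀ g ∈ H, (g : Matrix (Fin n) (Fin n) ℝ).mulVec μ = μ) ∧
    (∀ x ∈ S, (∀ g ∈ H, (g : Matrix (Fin n) (Fin n) ℝ).mulVec x = x) → x = μ) :=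
  stmt_2_general n H hH ν S hScomp hSconv hinv htrans ψ hψ μ hμ
end

section
/- Let K ⊆ ℝ^d (with its Euclidean norm, d ≥ 1) be a compact convex set with 0 in its topological interior, such that every point of the topological boundary of K is an extreme point of K. Suppose there is a subgroup 𝒢 of the orthogonal group O(d) with G·K = K for every G ∈ 𝒢, acting transitively on the extreme points of K: for all extreme points x, y of K there is G ∈ 𝒢 with G·x = y. Then there exists r > 0 such that K is the closed Euclidean ball of radius r centered at 0. -/
/-!
All boundary points of `K` are extreme, so `H` moves any boundary point to any
other, and the boundary lies on the sphere of radius `r = ‖p‖` for one boundary point `p`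
(`r > 0` as `0` is interior). A compact set with `0` in its interior and boundary on that sphere
is the closed ball: the open ball and every ray starting outside the closed ball are connected and
miss the frontier, so they lie in the interior; the first gives `closedBall 0 r ⊆ K`, the second
would make `K` unbounded.
-/

open Matrix Metric Set

theorem Matrix.norm_toLp_mulVec_of_mem_orthogonalGroup {n : Type*} [Fintype n] [DecidableEq n]
    {A : Matrix n n ℝ} (hA : A ∈ orthogonalGroup n ℝ) (x : EuclideanSpace ℝ n) :
    ‖(WithLp.toLp 2 (A *ᵥ x) : EuclideanSpace ℝ n)‖ = ‖x‖ :=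
  ContinuousLinearMap.norm_map_of_mem_unitary
    (Unitary.map_mem (toEuclideanCLM (n := n) (𝕜 := ℝ)) hA) x

theorem IsPreconnected.subset_interior_of_disjoint_frontier {X : Type*} [TopologicalSpace X]
    {s K : Set X} (hs : IsPreconnected s) (hsK : (s ∩ interior K).Nonempty)
    (hdisj : Disjoint s (frontier K)) : s ⊆ interior K := by
  refine hs.subset_of_closure_inter_subset isOpen_interior hsK fun x ⟨hxK, hxs⟩ => ?_
  by_contra hx
  exact hdisj.ne_of_mem hxs ⟨closure_mono interior_subset hxK, hx⟩ rfl

section FrontierOnSphere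

variable {E : Type*} [NormedAddCommGroup E] {K : Set E} {r : ℝ}

theorem disjoint_frontier_of_frontier_subset_sphere (hfr : frontier K ⊆ sphere 0 r) {s : Set E}
    (hs : ∀ y ∈ s, ‖y‖ ≠ r) : Disjoint s (frontier K) :=
  disjoint_left.2 fun y hys hyK => hs y hys (mem_sphere_zero_iff_norm.1 (hfr hyK))

variable [NormedSpace ℝ E]

theorem closedBall_subset_of_frontier_subset_sphere (hK : IsClosed K) (h0 : (0 : E) ∈ interior K)
    (hr : 0 < r) (hfr : frontier K ⊆ sphere 0 r) : closedBall 0 r ⊆ K := by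
  have hball : ball (0 : E) r ⊆ interior K :=
    (convex_ball 0 r).isPreconnected.subset_interior_of_disjoint_frontier
      ⟨0, mem_ball_self hr, h0⟩
      (disjoint_frontier_of_frontier_subset_sphere hfr fun y hy => (mem_ball_zero_iff.1 hy).ne)
  calc closedBall (0 : E) r = closure (ball 0 r) := (closure_ball 0 hr.ne').symm
    _ ⊆ closure K := closure_mono (hball.trans interior_subset)
    _ = K := hK.closure_eq

theorem subset_closedBall_of_frontier_subset_sphere (hK : Bornology.IsBounded K) (hr : 0 ≤ r)
    (hfr : frontier K ⊆ sphere 0 r) : K ⊆ closedBall 0 r := by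
  intro x hxK
  by_contra hxr
  replace hxr : r < ‖x‖ := by simpa using hxr
  have hx0 : 0 < ‖x‖ := hr.trans_lt hxr
  have hxK' : x ∈ interior K := self_sdiff_frontier K ▸
    ⟨hxK, disjoint_left.1 (disjoint_frontier_of_frontier_subset_sphere hfr
      (s := {x}) fun y hy => hy ▸ hxr.ne') rfl⟩
  have hray : (· • x) '' Ici (1 : ℝ) ⊆ K := by
    refine Subset.trans ?_ interior_subset
    refine (isPreconnected_Ici.image _ (by fun_prop)).subset_interior_of_disjoint_frontier
      ⟨x, ⟨1, self_mem_Ici, one_smul ℝ x⟩, hxK'⟩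
      (disjoint_frontier_of_frontier_subset_sphere hfr ?_)
    rintro _ ⟨t, ht, rfl⟩
    rw [norm_smul, Real.norm_of_nonneg (zero_le_one.trans ht)]
    nlinarith [mem_Ici.1 ht]
  obtain ⟨M, hM⟩ := hK.exists_norm_le
  have hM0 : 0 ≤ M := (norm_nonneg x).trans (hM x hxK)
  have hfar := hM _ (hray ⟨1 + M / ‖x‖, le_add_of_nonneg_right (div_nonneg hM0 hx0.le), rfl⟩)
  rw [norm_smul, Real.norm_of_nonneg (by positivity), add_mul, div_mul_cancel₀ _ hx0.ne'] at hfar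
  linarith

theorem eq_closedBall_of_frontier_subset_sphere (hK : IsCompact K) (h0 : (0 : E) ∈ interior K)
    (hr : 0 < r) (hfr : frontier K ⊆ sphere 0 r) : K = closedBall 0 r :=
  (subset_closedBall_of_frontier_subset_sphere hK.isBounded hr.le hfr).antisymm
    (closedBall_subset_of_frontier_subset_sphere hK.isClosed h0 hr hfr)

end FrontierOnSphere

theorem stmt_3_general (d : ℕ)
    (K : Set (EuclideanSpace ℝ (Fin d)))
    (hKc : IsCompact K)
    (h0 : (0 : EuclideanSpace ℝ (Fin d)) ∈ interior K)
    (hbd : frontier K ⊆ K.extremePoints ℝ)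
    (H : Subgroup (orthogonalGroup (Fin d) ℝ))
    (htrans : ∀ x ∈ K.extremePoints ℝ, ∀ y ∈ K.extremePoints ℝ,
      ∃ g ∈ H, (WithLp.toLp 2 ((g : Matrix (Fin d) (Fin d) ℝ).mulVec x) : EuclideanSpace ℝ (Fin d)) = y) :
    ∃ r > 0, K = Metric.closedBall 0 r := by
  have hsphere : ∃ r > 0, frontier K ⊆ sphere 0 r := by
    rcases (frontier K).eq_empty_or_nonempty with hempty | ⟨p, hp⟩
    · exact ⟨1, one_pos, hempty ▸ empty_subset _⟩
    refine ⟨‖p‖, norm_pos_iff.2 fun hp0 => (hp0 ▸ hp).2 h0, fun q hq => ?_⟩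
    obtain ⟨g, -, rfl⟩ := htrans p (hbd hp) q (hbd hq)
    exact mem_sphere_zero_iff_norm.2 (norm_toLp_mulVec_of_mem_orthogonalGroup g.2 p)
  obtain ⟨r, hr, hfr⟩ := hsphere
  exact ⟨r, hr, eq_closedBall_of_frontier_subset_sphere hKc h0 hr hfr⟩

/-- A compact convex set `K ⊆ ℝᵈ` with `0` in its interior, whose boundary points are all
extreme, and which is invariant under a subgroup of the orthogonal group acting transitively
on its extreme points, is a closed Euclidean ball centered at `0`. -/
theorem stmt_3 (d : ℕ) (hd : 1 ≤ d)
    (K : Set (EuclideanSpace ℝ (Fin d)))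
    (hKc : IsCompact K) (hKconv : Convex ℝ K)
    (h0 : (0 : EuclideanSpace ℝ (Fin d)) ∈ interior K)
    (hbd : frontier K ⊆ K.extremePoints ℝ)
    (H : Subgroup (orthogonalGroup (Fin d) ℝ))
    (hinv : ∀ g ∈ H,
      (fun x : EuclideanSpace ℝ (Fin d) =>
        (WithLp.toLp 2 ((g : Matrix (Fin d) (Fin d) ℝ).mulVec x) : EuclideanSpace ℝ (Fin d))) '' K = K)
    (htrans : ∀ x ∈ K.extremePoints ℝ, ∀ y ∈ K.extremePoints ℝ,
      ∃ g ∈ H, (WithLp.toLp 2 ((g : Matrix (Fin d) (Fin d) ℝ).mulVec x) : EuclideanSpace ℝ (Fin d)) = y) :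
    ∃ r > 0, K = Metric.closedBall 0 r :=
  stmt_3_general d K hKc h0 hbd H htrans
end

section
/- Let d ≥ 1 and let B denote the closed unit ball of Euclidean space ℝ^d. For an affine map f : ℝ^d → ℝ the following are equivalent: (i) f(x) ∈ [0,1] for all x ∈ B, and there exist x₀, x₁ ∈ B with f(x₀) = 0 and f(x₁) = 1; (ii) there exists a unit vector ν ∈ ℝ^d such that f(x) = (1 + ⟨ν, x⟩)/2 for all x ∈ ℝ^d, where ⟨·,·⟩ is the Euclidean inner product. -/
/-!
Writing `f = ⟪v, ·⟫ + c` by the Riesz representation, Cauchy–Schwarz and connectedness of the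
ball show that `f` maps the unit ball onto `[c - ‖v‖, c + ‖v‖]`, the endpoints being attained at
`∓ v / ‖v‖`. Condition (i) says exactly that this interval is `[0, 1]`, i.e. `c = ‖v‖ = 1/2`,
and then `ν = 2 v`.
-/

open RealInnerProductSpace Set Metric

theorem Set.OrdConnected.subset_Icc_and_mem_iff_eq {α : Type*} [Preorder α] {S : Set α}
    (hS : S.OrdConnected) {a b : α} (hab : a ≤ b) :
    (S ⊆ Icc a b ∧ a ∈ S ∧ b ∈ S) ↔ S = Icc a b :=
  ⟨fun ⟨hsub, ha, hb⟩ => hsub.antisymm (hS.out ha hb), by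
    rintro rfl
    exact ⟨subset_rfl, left_mem_Icc.2 hab, right_mem_Icc.2 hab⟩⟩

section InnerProductSpace

variable {E : Type*} [NormedAddCommGroup E] [InnerProductSpace ℝ E]

theorem real_inner_inv_norm_smul_self (v : E) : ⟪v, ‖v‖⁻¹ • v⟫ = ‖v‖ := by
  rw [real_inner_smul_right, real_inner_self_eq_norm_sq]
  rcases eq_or_ne ‖v‖ 0 with h | h
  · simp [h]
  · field_simp

theorem image_inner_closedBall (v : E) :
    (⟪v, ·⟫) '' closedBall 0 1 = Icc (-‖v‖) ‖v‖ := by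
  have hunit : ‖v‖⁻¹ • v ∈ closedBall (0 : E) 1 := by
    rw [mem_closedBall_zero_iff, norm_smul, norm_inv, norm_norm]
    exact inv_mul_le_one
  refine Subset.antisymm ?_ fun t ht => ?_
  · rintro _ ⟨x, hx, rfl⟩
    rw [mem_closedBall_zero_iff] at hx
    refine abs_le.1 ((abs_real_inner_le_norm v x).trans ?_)
    exact mul_le_of_le_one_right (norm_nonneg v) hx
  · refine ((convex_closedBall (0 : E) 1).isPreconnected.image (⟪v, ·⟫)
      (continuous_const.inner continuous_id).continuousOn).Icc_subset ?_ ?_ ht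
    · refine ⟨-(‖v‖⁻¹ • v), by simpa using hunit, show ⟪v, _⟫ = _ from ?_⟩
      rw [inner_neg_right, real_inner_inv_norm_smul_self]
    · exact ⟨_, hunit, real_inner_inv_norm_smul_self v⟩

theorem image_inner_add_const_closedBall (v : E) (c : ℝ) :
    (⟪v, ·⟫ + c) '' closedBall 0 1 = Icc (c - ‖v‖) (c + ‖v‖) := by
  rw [← image_image (· + c), image_inner_closedBall, image_add_const_Icc, neg_add_eq_sub,
    add_comm]

theorem AffineMap.exists_eq_inner_add_const [FiniteDimensional ℝ E] (f : E →ᵃ[ℝ] ℝ) :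
    ∃ v : E, ⇑f = (⟪v, ·⟫ + f 0) := by
  refine ⟨(InnerProductSpace.toDual ℝ E).symm (LinearMap.toContinuousLinearMap f.linear), ?_⟩
  ext x
  rw [f.decomp]
  simp [InnerProductSpace.toDual_symm_apply]

theorem AffineMap.tight_on_closedBall_iff [FiniteDimensional ℝ E] (f : E →ᵃ[ℝ] ℝ) :
    ((∀ x ∈ closedBall (0 : E) 1, f x ∈ Icc (0 : ℝ) 1) ∧
      (∃ x₀ ∈ closedBall (0 : E) 1, f x₀ = 0) ∧ (∃ x₁ ∈ closedBall (0 : E) 1, f x₁ = 1)) ↔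
    ∃ ν : E, ‖ν‖ = 1 ∧ ∀ x, f x = (1 + ⟪ν, x⟫) / 2 := by
  obtain ⟨v, hf⟩ := f.exists_eq_inner_add_const
  have hconn : (f '' closedBall 0 1).OrdConnected := by
    rw [hf, image_inner_add_const_closedBall]
    exact ordConnected_Icc
  refine ((mapsTo_iff_image_subset.and Iff.rfl).trans
    (hconn.subset_Icc_and_mem_iff_eq zero_le_one)).trans ⟨fun h => ?_, ?_⟩
  · rw [hf, image_inner_add_const_closedBall, Icc_eq_Icc_iff (by linarith [norm_nonneg v])] at h
    refine ⟨(2 : ℝ) • v, ?_, fun x => ?_⟩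
    · rw [norm_smul, Real.norm_two]
      linarith [h.1, h.2]
    · rw [hf, real_inner_smul_left]
      linarith [h.1, h.2]
  · rintro ⟨ν, hν, hfν⟩
    have hf' : ⇑f = (⟪(1 / 2 : ℝ) • ν, ·⟫ + 1 / 2) := by
      ext x
      rw [hfν, real_inner_smul_left]
      ring
    rw [hf', image_inner_add_const_closedBall, norm_smul, hν]
    norm_num

end InnerProductSpace

theorem stmt_4_general (d : ℕ)
    (f : EuclideanSpace ℝ (Fin d) →ᵃ[ℝ] ℝ) :
    ((∀ x ∈ Metric.closedBall (0 : EuclideanSpace ℝ (Fin d)) 1, f x ∈ Set.Icc (0 : ℝ) 1) ∧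
      (∃ x₀ ∈ Metric.closedBall (0 : EuclideanSpace ℝ (Fin d)) 1, f x₀ = 0) ∧
      (∃ x₁ ∈ Metric.closedBall (0 : EuclideanSpace ℝ (Fin d)) 1, f x₁ = 1)) ↔
    (∃ ν : EuclideanSpace ℝ (Fin d), ‖ν‖ = 1 ∧ ∀ x, f x = (1 + ⟪ν, x⟫) / 2) :=
  f.tight_on_closedBall_iff

/-- An affine map `f : ℝᵈ → ℝ` is a tight effect on the closed unit ball (it takes values in
`[0,1]` there and attains both `0` and `1`) if and only if there is a unit vector `ν` with
`f x = (1 + ⟨ν, x⟩)/2` for all `x`. -/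
theorem stmt_4 (d : ℕ) (hd : 1 ≤ d)
    (f : EuclideanSpace ℝ (Fin d) →ᵃ[ℝ] ℝ) :
    ((∀ x ∈ Metric.closedBall (0 : EuclideanSpace ℝ (Fin d)) 1, f x ∈ Set.Icc (0 : ℝ) 1) ∧
      (∃ x₀ ∈ Metric.closedBall (0 : EuclideanSpace ℝ (Fin d)) 1, f x₀ = 0) ∧
      (∃ x₁ ∈ Metric.closedBall (0 : EuclideanSpace ℝ (Fin d)) 1, f x₁ = 1)) ↔
    (∃ ν : EuclideanSpace ℝ (Fin d), ‖ν‖ = 1 ∧ ∀ x, f x = (1 + ⟪ν, x⟫) / 2) :=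
  stmt_4_general d f
end

section
/- Let d ≥ 1, let B denote the closed unit ball of Euclidean space ℝ^d, and let x ∈ ℝ^d with ‖x‖ = 1. If f : ℝ^d → ℝ is an affine map such that f(y) ∈ [0,1] for all y ∈ B, f(x) = 1, and f(y₀) = 0 for some y₀ ∈ B, then f(y) = (1 + ⟨x, y⟩)/2 for all y ∈ ℝ^d. (That is, for every point on the unit sphere there is exactly one tight effect assigning it the value 1.) -/
open RealInnerProductSpace Metric

/-!
Since `f` is affine, `f (-y) + f y = 2 f 0`; as `f` takes the values `0` and `1` on the
symmetric ball and stays in `[0,1]` there, this forces `f 0 = 1/2` and `|f.linear y| ≤ ‖y‖/2`.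
So `2 f.linear` is a functional of norm at most `1` taking the value `1` at the unit vector `x`.
By the Riesz representation it is `⟪v, ·⟫` with `‖v‖ ≤ 1` and `⟪v, x⟫ = 1`, and the equality
case of Cauchy–Schwarz gives `v = x`.
-/

section Hilbert

variable {E : Type*} [NormedAddCommGroup E] [InnerProductSpace ℝ E]

theorem eq_of_norm_le_one_of_inner_eq_one {u x : E} (hu : ‖u‖ ≤ 1) (hx : ‖x‖ = 1)
    (h : ⟪u, x⟫ = 1) : u = x := by
  have hu1 : ‖u‖ = 1 := le_antisymm hu <| by
    simpa [h, hx] using real_inner_le_norm u x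
  exact (inner_eq_one_iff_of_norm_eq_one hu1 hx).mp h

theorem ContinuousLinearMap.apply_eq_inner_of_norm_le_one [CompleteSpace E] (ℓ : StrongDual ℝ E)
    (hℓ : ‖ℓ‖ ≤ 1) {x : E} (hx : ‖x‖ = 1) (hℓx : ℓ x = 1) (y : E) : ℓ y = ⟪x, y⟫ := by
  set v := (InnerProductSpace.toDual ℝ E).symm ℓ
  have hv : v = x := by
    refine eq_of_norm_le_one_of_inner_eq_one (by simpa [v] using hℓ) hx ?_
    rw [InnerProductSpace.toDual_symm_apply, hℓx]
  rw [← hv, InnerProductSpace.toDual_symm_apply]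

end Hilbert

section TightEffect

variable {E : Type*} [NormedAddCommGroup E] [NormedSpace ℝ E] (f : E →ᵃ[ℝ] ℝ)

theorem AffineMap.apply_neg_add_apply (y : E) : f (-y) + f y = 2 * f 0 := by
  rw [congrFun f.decomp, congrFun f.decomp y]
  simp only [Pi.add_apply, map_neg]
  ring

theorem AffineMap.apply_zero_eq_half_of_tight
    (hf01 : ∀ y ∈ closedBall (0 : E) 1, f y ∈ Set.Icc (0 : ℝ) 1)
    (h1 : ∃ x ∈ closedBall (0 : E) 1, f x = 1)
    (h0 : ∃ y ∈ closedBall (0 : E) 1, f y = 0) : f 0 = 1 / 2 := by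
  obtain ⟨x, hx, hfx⟩ := h1
  obtain ⟨y, hy, hfy⟩ := h0
  have hfnx := (hf01 (-x) (by simpa using hx)).1
  have hfny := (hf01 (-y) (by simpa using hy)).2
  linarith [f.apply_neg_add_apply x, f.apply_neg_add_apply y]

theorem AffineMap.norm_linear_le_of_apply_zero_eq_half
    (hf01 : ∀ y ∈ closedBall (0 : E) 1, f y ∈ Set.Icc (0 : ℝ) 1) (hf0 : f 0 = 1 / 2) (z : E) :
    ‖f.linear z‖ ≤ 2⁻¹ * ‖z‖ := by
  have hball : ∀ y ∈ closedBall (0 : E) 1, ‖f.linear y‖ ≤ 2⁻¹ := by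
    intro y hy
    have hfy := hf01 y hy
    rw [congrFun f.decomp y, Pi.add_apply, hf0] at hfy
    rw [Real.norm_eq_abs, abs_le]
    constructor <;> linarith [hfy.1, hfy.2]
  simpa using f.linear.bound_of_ball_bound' one_pos 2⁻¹ hball z

end TightEffect

theorem stmt_5_general (d : ℕ)
    (x : EuclideanSpace ℝ (Fin d)) (hx : ‖x‖ = 1)
    (f : EuclideanSpace ℝ (Fin d) →ᵃ[ℝ] ℝ)
    (hf01 : ∀ y ∈ Metric.closedBall (0 : EuclideanSpace ℝ (Fin d)) 1, f y ∈ Set.Icc (0 : ℝ) 1)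
    (hfx : f x = 1)
    (hf0 : ∃ y₀ ∈ Metric.closedBall (0 : EuclideanSpace ℝ (Fin d)) 1, f y₀ = 0) :
    ∀ y, f y = (1 + ⟪x, y⟫) / 2 := by
  have hxball : x ∈ closedBall (0 : EuclideanSpace ℝ (Fin d)) 1 := by simp [hx]
  have hf0half := f.apply_zero_eq_half_of_tight hf01 ⟨x, hxball, hfx⟩ hf0
  set ℓ := (2 : ℝ) • f.linear.mkContinuous 2⁻¹ (f.norm_linear_le_of_apply_zero_eq_half hf01 hf0half)
  have hℓ : ‖ℓ‖ ≤ 1 := by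
    have := LinearMap.mkContinuous_norm_le _ (by norm_num : (0 : ℝ) ≤ 2⁻¹)
      (f.norm_linear_le_of_apply_zero_eq_half hf01 hf0half)
    rw [norm_smul, Real.norm_two]
    linarith
  have hdecomp : ∀ y, f y = ℓ y / 2 + 1 / 2 := fun y => by
    simp [ℓ, congrFun f.decomp y, hf0half]
  have hℓx : ℓ x = 1 := by linarith [hdecomp x]
  intro y
  rw [hdecomp, ℓ.apply_eq_inner_of_norm_le_one hℓ hx hℓx]
  ring

/-- For every point `x` on the unit sphere of `ℝᵈ` there is exactly one tight effect assigning
it the value `1`: any affine map `f` with values in `[0,1]` on the closed unit ball, attaining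
`0` somewhere on the ball and with `f x = 1`, must be `f y = (1 + ⟨x, y⟩)/2`. -/
theorem stmt_5 (d : ℕ) (hd : 1 ≤ d)
    (x : EuclideanSpace ℝ (Fin d)) (hx : ‖x‖ = 1)
    (f : EuclideanSpace ℝ (Fin d) →ᵃ[ℝ] ℝ)
    (hf01 : ∀ y ∈ Metric.closedBall (0 : EuclideanSpace ℝ (Fin d)) 1, f y ∈ Set.Icc (0 : ℝ) 1)
    (hfx : f x = 1)
    (hf0 : ∃ y₀ ∈ Metric.closedBall (0 : EuclideanSpace ℝ (Fin d)) 1, f y₀ = 0) :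
    ∀ y, f y = (1 + ⟪x, y⟫) / 2 :=
  stmt_5_general d x hx f hf01 hfx hf0
end

section
/- Let 𝒢 ≤ GL(m,ℝ) and ℋ ≤ GL(n,ℝ) be compact subgroups, let S_A ⊆ ℝ^m and S_B ⊆ ℝⁿ be nonempty compact convex sets with G·S_A = S_A for all G ∈ 𝒢 and H·S_B = S_B for all H ∈ ℋ, and suppose 𝒢 acts transitively on the extreme points of S_A and ℋ acts transitively on the extreme points of S_B. Let μ_A = ∫_𝒢 (G·ψ) dG for some extreme point ψ of S_A (independent of the choice by transitivity), and similarly μ_B for S_B, the integrals taken with respect to the normalized Haar measures. Let Z be an m×n real matrix such that: (i) Z = Σ_k t_k · ψ_k φ_kᵀ for finitely many reals t_k with Σ_k t_k = 1, where each ψ_k is an extreme point of S_A and each φ_k an extreme point of S_B; and (ii) G Z Hᵀ = Z for all G ∈ 𝒢 and H ∈ ℋ. Then Z = μ_A μ_Bᵀ. -/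
/-!
Let `P_G = ∫ g dg` be the Haar average of `G`. A left-invariant probability measure on a compact
group is also right-invariant, so `P_G g = P_G` for `g ∈ G`; by transitivity `P_G ψ = μ_A` for
every extreme point `ψ` of `S_A`, and likewise `P_H φ = μ_B`. Invariance of `Z` under each factor
separately gives `Z = P_G Z P_Hᵀ`, and expanding `Z = ∑ t_k ψ_k φ_kᵀ` turns the right-hand side
into `(∑ t_k) μ_A μ_Bᵀ = μ_A μ_Bᵀ`.
-/

open Matrix MeasureTheory

theorem MeasureTheory.Measure.isMulRightInvariant_of_compactSpace {G : Type*} [Group G]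
    [TopologicalSpace G] [IsTopologicalGroup G] [T2Space G] [CompactSpace G]
    [MeasurableSpace G] [BorelSpace G]
    (ν : Measure G) [IsProbabilityMeasure ν] [ν.IsMulLeftInvariant] :
    ν.IsMulRightInvariant where
  map_mul_right_eq_self g := by
    have : IsProbabilityMeasure (ν.map (· * g)) :=
      isProbabilityMeasure_map (measurable_mul_const g).aemeasurable
    have : ν.IsHaarMeasure := ⟨⟩
    have : (ν.map (· * g)).IsHaarMeasure := ⟨⟩
    exact Measure.isHaarMeasure_eq_of_isProbabilityMeasure _ _

theorem Matrix.mul_sum_smul_vecMulVec_mul_transpose {ι l m n o R : Type*} [Fintype ι]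
    [Fintype m] [Fintype n] [CommSemiring R] (A : Matrix l m R) (B : Matrix o n R)
    (t : ι → R) (x : ι → m → R) (y : ι → n → R) :
    A * (∑ i, t i • vecMulVec (x i) (y i)) * Bᵀ =
      ∑ i, t i • vecMulVec (A *ᵥ x i) (B *ᵥ y i) := by
  simp only [Matrix.mul_sum, Matrix.sum_mul, Matrix.mul_smul, Matrix.smul_mul, mul_vecMulVec,
    vecMulVec_mul, vecMul_transpose]

section HaarAverage

variable {ι : Type*} [Fintype ι] [DecidableEq ι] {G : Subgroup (GL ι ℝ)}
  [MeasurableSpace G] [BorelSpace G] [CompactSpace G] (ν : Measure G) [IsFiniteMeasure ν]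

theorem integrable_coe_mulVec (v : ι → ℝ) :
    Integrable (fun g : G => ((g : GL ι ℝ) : Matrix ι ι ℝ) *ᵥ v) ν :=
  (Continuous.matrix_mulVec (Units.continuous_val.comp continuous_subtype_val)
    continuous_const).integrable_of_hasCompactSupport (HasCompactSupport.of_compactSpace _)

/-- Matrices carry no global norm instance, so the average `∫ g dg` is built from its action on
vectors. -/
noncomputable def haarAverage : Matrix ι ι ℝ :=
  LinearMap.toMatrix'
    { toFun v := ∫ g : G, ((g : GL ι ℝ) : Matrix ι ι ℝ) *ᵥ v ∂ν
      map_add' v w := by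
        simp only [mulVec_add]
        exact integral_add (integrable_coe_mulVec ν v) (integrable_coe_mulVec ν w)
      map_smul' c v := by
        simp only [mulVec_smul]
        exact integral_smul c _ }

theorem haarAverage_mulVec (v : ι → ℝ) :
    haarAverage ν *ᵥ v = ∫ g : G, ((g : GL ι ℝ) : Matrix ι ι ℝ) *ᵥ v ∂ν :=
  LinearMap.toMatrix'_mulVec _ v

theorem haarAverage_mul_eq_of_forall_mul_eq [IsProbabilityMeasure ν] {κ : Type*} [Fintype κ]
    {A : Matrix ι κ ℝ} (hA : ∀ g ∈ G, (g : Matrix ι ι ℝ) * A = A) : haarAverage ν * A = A := by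
  have hA' (g : G) : ((g : GL ι ℝ) : Matrix ι ι ℝ) * A = A := hA g g.2
  refine ext_iff_mulVec.mpr fun w => ?_
  rw [← mulVec_mulVec, haarAverage_mulVec]
  simp [mulVec_mulVec, hA']

theorem haarAverage_mulVec_eq_of_mulVec_eq [ν.IsMulRightInvariant] {g : GL ι ℝ} (hg : g ∈ G)
    {x y : ι → ℝ} (hxy : (g : Matrix ι ι ℝ) *ᵥ x = y) :
    haarAverage ν *ᵥ y = haarAverage ν *ᵥ x := by
  rw [← hxy, haarAverage_mulVec, haarAverage_mulVec,
    ← integral_mul_right_eq_self (fun g' : G => ((g' : GL ι ℝ) : Matrix ι ι ℝ) *ᵥ x) ⟨g, hg⟩]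
  simp [mulVec_mulVec]

end HaarAverage

theorem stmt_8_general (m n : ℕ)
    (G : Subgroup (GL (Fin m) ℝ)) (H : Subgroup (GL (Fin n) ℝ))
    (hG : IsCompact (G : Set (GL (Fin m) ℝ))) (hH : IsCompact (H : Set (GL (Fin n) ℝ)))
    [MeasurableSpace ↥G] [BorelSpace ↥G] [MeasurableSpace ↥H] [BorelSpace ↥H]
    (νG : Measure ↥G) [IsProbabilityMeasure νG] [νG.IsMulLeftInvariant]
    (νH : Measure ↥H) [IsProbabilityMeasure νH] [νH.IsMulLeftInvariant]
    (SA : Set (Fin m → ℝ))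
    (SB : Set (Fin n → ℝ))
    (htransA : ∀ x ∈ SA.extremePoints ℝ, ∀ y ∈ SA.extremePoints ℝ,
      ∃ g ∈ G, (g : Matrix (Fin m) (Fin m) ℝ).mulVec x = y)
    (htransB : ∀ x ∈ SB.extremePoints ℝ, ∀ y ∈ SB.extremePoints ℝ,
      ∃ h ∈ H, (h : Matrix (Fin n) (Fin n) ℝ).mulVec x = y)
    (ψA : Fin m → ℝ) (hψA : ψA ∈ SA.extremePoints ℝ)
    (μA : Fin m → ℝ)
    (hμA : μA = ∫ g : ↥G, ((g : GL (Fin m) ℝ) : Matrix (Fin m) (Fin m) ℝ).mulVec ψA ∂νG)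
    (ψB : Fin n → ℝ) (hψB : ψB ∈ SB.extremePoints ℝ)
    (μB : Fin n → ℝ)
    (hμB : μB = ∫ h : ↥H, ((h : GL (Fin n) ℝ) : Matrix (Fin n) (Fin n) ℝ).mulVec ψB ∂νH)
    (Z : Matrix (Fin m) (Fin n) ℝ)
    (hZrep : ∃ (k : ℕ) (t : Fin k → ℝ) (ψ : Fin k → (Fin m → ℝ)) (φ : Fin k → (Fin n → ℝ)),
      (∀ i, ψ i ∈ SA.extremePoints ℝ) ∧ (∀ i, φ i ∈ SB.extremePoints ℝ) ∧
      (∑ i, t i) = 1 ∧ Z = ∑ i, t i • vecMulVec (ψ i) (φ i))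
    (hZinv : ∀ g ∈ G, ∀ h ∈ H,
      (g : Matrix (Fin m) (Fin m) ℝ) * Z * (h : Matrix (Fin n) (Fin n) ℝ)ᵀ = Z) :
    Z = vecMulVec μA μB := by
  obtain ⟨k, t, ψ, φ, hψ, hφ, ht, hZ⟩ := hZrep
  have := isCompact_iff_compactSpace.mp hG
  have := isCompact_iff_compactSpace.mp hH
  have := νG.isMulRightInvariant_of_compactSpace
  have := νH.isMulRightInvariant_of_compactSpace
  have hGZ : haarAverage νG * Z = Z := haarAverage_mul_eq_of_forall_mul_eq νG fun g hg => by
    simpa using hZinv g hg 1 H.one_mem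
  have hHZ : haarAverage νH * Zᵀ = Zᵀ := haarAverage_mul_eq_of_forall_mul_eq νH fun h hh => by
    simpa using congrArg transpose (hZinv 1 G.one_mem h hh)
  have hGψ (i : Fin k) : haarAverage νG *ᵥ ψ i = μA := by
    obtain ⟨g, hg, hgψ⟩ := htransA ψA hψA (ψ i) (hψ i)
    rw [haarAverage_mulVec_eq_of_mulVec_eq νG hg hgψ, haarAverage_mulVec, hμA]
  have hHφ (i : Fin k) : haarAverage νH *ᵥ φ i = μB := by
    obtain ⟨h, hh, hhφ⟩ := htransB ψB hψB (φ i) (hφ i)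
    rw [haarAverage_mulVec_eq_of_mulVec_eq νH hh hhφ, haarAverage_mulVec, hμB]
  calc Z = haarAverage νG * Z * (haarAverage νH)ᵀ := by
        rw [hGZ, ← transpose_transpose (Z * _), transpose_mul, transpose_transpose, hHZ,
          transpose_transpose]
    _ = vecMulVec μA μB := by
        rw [hZ, mul_sum_smul_vecMulVec_mul_transpose]
        simp only [hGψ, hHφ, ← Finset.sum_smul, ht, one_smul]

/-- If `Z` is a real `m × n` matrix that is an affine combination (coefficients summing to one)
of rank-one products `ψ φᵀ` of extreme points of invariant compact convex sets `S_A`, `S_B`,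
and `Z` is invariant under `Z ↦ G Z Hᵀ` for all elements of compact transitive subgroups,
then `Z = μ_A μ_Bᵀ`, the product of the barycenters. -/
theorem stmt_8 (m n : ℕ)
    (G : Subgroup (GL (Fin m) ℝ)) (H : Subgroup (GL (Fin n) ℝ))
    (hG : IsCompact (G : Set (GL (Fin m) ℝ))) (hH : IsCompact (H : Set (GL (Fin n) ℝ)))
    [MeasurableSpace ↥G] [BorelSpace ↥G] [MeasurableSpace ↥H] [BorelSpace ↥H]
    (νG : Measure ↥G) [IsProbabilityMeasure νG] [νG.IsMulLeftInvariant]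
    (νH : Measure ↥H) [IsProbabilityMeasure νH] [νH.IsMulLeftInvariant]
    (SA : Set (Fin m → ℝ)) (hSAne : SA.Nonempty) (hSAc : IsCompact SA) (hSAconv : Convex ℝ SA)
    (SB : Set (Fin n → ℝ)) (hSBne : SB.Nonempty) (hSBc : IsCompact SB) (hSBconv : Convex ℝ SB)
    (hinvA : ∀ g ∈ G, (fun x => (g : Matrix (Fin m) (Fin m) ℝ).mulVec x) '' SA = SA)
    (hinvB : ∀ h ∈ H, (fun y => (h : Matrix (Fin n) (Fin n) ℝ).mulVec y) '' SB = SB)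
    (htransA : ∀ x ∈ SA.extremePoints ℝ, ∀ y ∈ SA.extremePoints ℝ,
      ∃ g ∈ G, (g : Matrix (Fin m) (Fin m) ℝ).mulVec x = y)
    (htransB : ∀ x ∈ SB.extremePoints ℝ, ∀ y ∈ SB.extremePoints ℝ,
      ∃ h ∈ H, (h : Matrix (Fin n) (Fin n) ℝ).mulVec x = y)
    (ψA : Fin m → ℝ) (hψA : ψA ∈ SA.extremePoints ℝ)
    (μA : Fin m → ℝ)
    (hμA : μA = ∫ g : ↥G, ((g : GL (Fin m) ℝ) : Matrix (Fin m) (Fin m) ℝ).mulVec ψA ∂νG)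
    (ψB : Fin n → ℝ) (hψB : ψB ∈ SB.extremePoints ℝ)
    (μB : Fin n → ℝ)
    (hμB : μB = ∫ h : ↥H, ((h : GL (Fin n) ℝ) : Matrix (Fin n) (Fin n) ℝ).mulVec ψB ∂νH)
    (Z : Matrix (Fin m) (Fin n) ℝ)
    (hZrep : ∃ (k : ℕ) (t : Fin k → ℝ) (ψ : Fin k → (Fin m → ℝ)) (φ : Fin k → (Fin n → ℝ)),
      (∀ i, ψ i ∈ SA.extremePoints ℝ) ∧ (∀ i, φ i ∈ SB.extremePoints ℝ) ∧
      (∑ i, t i) = 1 ∧ Z = ∑ i, t i • vecMulVec (ψ i) (φ i))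
    (hZinv : ∀ g ∈ G, ∀ h ∈ H,
      (g : Matrix (Fin m) (Fin m) ℝ) * Z * (h : Matrix (Fin n) (Fin n) ℝ)ᵀ = Z) :
    Z = vecMulVec μA μB :=
  stmt_8_general m n G H hG hH νG νH SA SB htransA htransB ψA hψA μA hμA ψB hψB μB hμB Z hZrep hZinv
end
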